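/- Assume v ≤ v₀ and |m − θ₀| ≤ δ₀, where v₀ > 0, θ₀ ∈ ℝ and δ₀ ≥ 0 are known prior to observing the sample. Let ε₁, …, ε_k ∈ (0,1) and x₂, …, x_k > 0. Let U₂, …, U_k be uniform random variables in (−1, 1), independent of each other and of the sample. Define recursively: δ₁ = √(2(v₀ + δ₀²) log(ε₁⁻¹)/n), α₁ = √(2 log(ε₁⁻¹)/(n(v₀ + δ₀²))), θ̃₁ = θ̂_{α₁}(θ₀); and for i = 2, …, k: γᵢ = log(1 + xᵢ⁻¹), δᵢ = √(2[v₀ + (1 + xᵢ)² δᵢ₋₁²][log(εᵢ⁻¹) + γᵢ]/n), αᵢ = √(2[log(εᵢ⁻¹) + γᵢ]/(n[v₀ + (1 + xᵢ)² δᵢ₋₁²])), θ̃ᵢ = θ̂_{αᵢ}(θ̃ᵢ₋₁ + xᵢ δᵢ₋₁ Uᵢ). Then with probability at least 1 − 2 Σ_{i=1}^k εᵢ, |m − θ̃_k| ≤ δ_k. -/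

import Mathlib

/-!
Catoni's estimator obeys an exponential deviation bound: since `exp (T x) ≤ 1 + x + x²/2`,
Markov's inequality applied to `∏ᵢ exp (T (±α (Yᵢ - θ)))` shows that `θ̂_α(θ)` misses `m` by more
than `α (v + (m - θ)²)/2 + L/(nα)` with probability at most `2 exp (-L)`, and the choice
`α = √(2L/(nQ))` turns this threshold into `√(2QL/n)` whenever `v + (m - θ)² ≤ Q`.

The starting point `θ̃ᵢ₋₁ + xᵢ δᵢ₋₁ Uᵢ` of step `i` is random but independent of the sample. On the
event `|m - θ̃ᵢ₋₁| ≤ δᵢ₋₁` its law has density at most `1/(2 xᵢ δᵢ₋₁)` and lives within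
`(1 + xᵢ) δᵢ₋₁` of `m`, where the fixed-start bound holds with `Q = v₀ + (1 + xᵢ)² δᵢ₋₁²`.
Averaging over the start costs the factor `(1 + xᵢ)/xᵢ = exp γᵢ`, which the term `γᵢ` in `δᵢ`
pays for, so step `i` fails with probability at most `2 εᵢ`; a union bound over the steps concludes.
-/
open MeasureTheory ProbabilityTheory

/-- The threshold function `T(x) = (1/2) log ((1 + x + x²/2)/(1 - x + x²/2))`. -/
noncomputable def threshT (x : ℝ) : ℝ :=
  (1 / 2) * Real.log ((1 + x + x ^ 2 / 2) / (1 - x + x ^ 2 / 2))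

/-- The truncated mean estimator
`θ̂_α(θ₀) = θ₀ + (1/(n α)) ∑ᵢ T (α (Yᵢ - θ₀))` computed on a sample `Y : Fin n → ℝ`. -/
noncomputable def thetaHat (n : ℕ) (α θ₀ : ℝ) (Y : Fin n → ℝ) : ℝ :=
  θ₀ + (1 / (n * α)) * ∑ i, threshT (α * (Y i - θ₀))

/-- The deterministic sequence of accuracies `δᵢ` of the iterated scheme:
`δ₁ = √(2 (v₀ + δ₀²) log (ε₁⁻¹)/n)` and, for `i ≥ 2`,
`δᵢ = √(2 [v₀ + (1 + xᵢ)² δᵢ₋₁²] [log (εᵢ⁻¹) + log (1 + xᵢ⁻¹)]/n)`. -/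
noncomputable def deltaSeq (n : ℕ) (v₀ δ₀ : ℝ) (ε x : ℕ → ℝ) : ℕ → ℝ
  | 0 => δ₀
  | 1 => Real.sqrt (2 * (v₀ + δ₀ ^ 2) * Real.log (ε 1)⁻¹ / n)
  | (i + 2) =>
      Real.sqrt (2 * (v₀ + (1 + x (i + 2)) ^ 2 * (deltaSeq n v₀ δ₀ ε x (i + 1)) ^ 2) *
        (Real.log (ε (i + 2))⁻¹ + Real.log (1 + (x (i + 2))⁻¹)) / n)

/-- The deterministic sequence of truncation parameters `αᵢ` of the iterated scheme:
`α₁ = √(2 log (ε₁⁻¹)/(n (v₀ + δ₀²)))` and, for `i ≥ 2`,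
`αᵢ = √(2 [log (εᵢ⁻¹) + log (1 + xᵢ⁻¹)]/(n [v₀ + (1 + xᵢ)² δᵢ₋₁²]))`. -/
noncomputable def alphaSeq (n : ℕ) (v₀ δ₀ : ℝ) (ε x : ℕ → ℝ) : ℕ → ℝ
  | 0 => 0
  | 1 => Real.sqrt (2 * Real.log (ε 1)⁻¹ / (n * (v₀ + δ₀ ^ 2)))
  | (i + 2) =>
      Real.sqrt (2 * (Real.log (ε (i + 2))⁻¹ + Real.log (1 + (x (i + 2))⁻¹)) /
        (n * (v₀ + (1 + x (i + 2)) ^ 2 * (deltaSeq n v₀ δ₀ ε x (i + 1)) ^ 2)))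

/-- The sequence of iterated truncated mean estimators:
`θ̃₁ = θ̂_{α₁}(θ₀)` and, for `i ≥ 2`, `θ̃ᵢ = θ̂_{αᵢ}(θ̃ᵢ₋₁ + xᵢ δᵢ₋₁ Uᵢ)`. -/
noncomputable def thetaSeq (n : ℕ) (v₀ δ₀ θ₀ : ℝ) (ε x : ℕ → ℝ)
    (Y : Fin n → ℝ) (U : ℕ → ℝ) : ℕ → ℝ
  | 0 => θ₀
  | 1 => thetaHat n (alphaSeq n v₀ δ₀ ε x 1) θ₀ Y
  | (i + 2) =>
      thetaHat n (alphaSeq n v₀ δ₀ ε x (i + 2))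
        (thetaSeq n v₀ δ₀ θ₀ ε x Y U (i + 1) +
          x (i + 2) * deltaSeq n v₀ δ₀ ε x (i + 1) * U (i + 2)) Y

open scoped ENNReal

lemma threshT_neg (x : ℝ) : threshT (-x) = -threshT x := by
  have : (1 + -x + (-x) ^ 2 / 2) / (1 - -x + (-x) ^ 2 / 2) =
      ((1 + x + x ^ 2 / 2) / (1 - x + x ^ 2 / 2))⁻¹ := by
    rw [inv_div]; ring_nf
  rw [threshT, threshT, this, Real.log_inv]
  ring

lemma exp_threshT_le (x : ℝ) : Real.exp (threshT x) ≤ 1 + x + x ^ 2 / 2 := by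
  have hA : 0 < 1 + x + x ^ 2 / 2 := by nlinarith [sq_nonneg (x + 1)]
  have hB : 0 < 1 - x + x ^ 2 / 2 := by nlinarith [sq_nonneg (x - 1)]
  -- `(1 + x + x²/2)(1 - x + x²/2) = 1 + x⁴/4 ≥ 1`, so `T x ≤ log (1 + x + x²/2)`
  have hlog : threshT x ≤ Real.log (1 + x + x ^ 2 / 2) := by
    have : (1 + x + x ^ 2 / 2)⁻¹ ≤ 1 - x + x ^ 2 / 2 := by
      rw [inv_le_iff_one_le_mul₀ hA]; nlinarith [sq_nonneg (x ^ 2)]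
    have := Real.log_le_log (by positivity) this
    rw [Real.log_inv] at this
    rw [threshT, Real.log_div hA.ne' hB.ne']
    linarith
  simpa [Real.exp_log hA] using Real.exp_le_exp.2 hlog

@[fun_prop]
lemma continuous_threshT : Continuous threshT := by
  have hB (x : ℝ) : 1 - x + x ^ 2 / 2 ≠ 0 := by nlinarith [sq_nonneg (x - 1)]
  refine continuous_const.mul ((Continuous.div (by fun_prop) (by fun_prop) hB).log fun x => ?_)
  exact div_ne_zero (by nlinarith [sq_nonneg (x + 1)]) (hB x)

@[fun_prop]
lemma continuous_thetaHat (n : ℕ) (α : ℝ) :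
    Continuous fun p : ℝ × (Fin n → ℝ) => thetaHat n α p.1 p.2 := by
  unfold thetaHat; fun_prop

section Moments

variable {μ : Measure ℝ} [IsProbabilityMeasure μ]

lemma integrable_id_of_integrable_sq (hμ : Integrable (fun y => y ^ 2) μ) :
    Integrable (fun y => y) μ :=
  ((memLp_two_iff_integrable_sq aestronglyMeasurable_id).2 hμ).integrable one_le_two

lemma integrable_sub_sq (hμ : Integrable (fun y => y ^ 2) μ) (θ : ℝ) :
    Integrable (fun y => (y - θ) ^ 2) μ := by
  refine ((hμ.sub ((integrable_id_of_integrable_sq hμ).const_mul (2 * θ))).add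
    (integrable_const (θ ^ 2))).congr (ae_of_all _ fun y => ?_)
  simp only [Pi.add_apply, Pi.sub_apply]; ring

lemma integrable_quadratic (hμ : Integrable (fun y => y ^ 2) μ) (θ a b c : ℝ) :
    Integrable (fun y => a + b * (y - θ) + c * (y - θ) ^ 2) μ :=
  ((integrable_const a).add ((integrable_id_of_integrable_sq hμ).sub (integrable_const θ)
    |>.const_mul b)).add ((integrable_sub_sq hμ θ).const_mul c)

lemma integral_quadratic (hμ : Integrable (fun y => y ^ 2) μ) (θ a b c : ℝ) :
    ∫ y, (a + b * (y - θ) + c * (y - θ) ^ 2) ∂μ =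
      a + b * (∫ y, y ∂μ - θ) + c * ∫ y, (y - θ) ^ 2 ∂μ := by
  have h1 := integrable_id_of_integrable_sq hμ
  have hlin : Integrable (fun y => y - θ) μ := h1.sub (integrable_const θ)
  rw [integral_add (f := fun y => a + b * (y - θ)) ((integrable_const a).add (hlin.const_mul b))
      ((integrable_sub_sq hμ θ).const_mul c), integral_add (integrable_const a) (hlin.const_mul b),
    integral_const_mul, integral_const_mul, integral_sub h1 (integrable_const θ)]
  simp

lemma integral_sub_sq (hμ : Integrable (fun y => y ^ 2) μ) (θ : ℝ) :
    ∫ y, (y - θ) ^ 2 ∂μ = ∫ y, (y - ∫ z, z ∂μ) ^ 2 ∂μ + (∫ z, z ∂μ - θ) ^ 2 := by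
  set m := ∫ z, z ∂μ
  calc ∫ y, (y - θ) ^ 2 ∂μ = ∫ y, ((m - θ) ^ 2 + 2 * (m - θ) * (y - m) + 1 * (y - m) ^ 2) ∂μ := by
        congr 1; ext y; ring
    _ = _ := by rw [integral_quadratic hμ]; ring

lemma lintegral_exp_threshT_le (hμ : Integrable (fun y => y ^ 2) μ) (a θ : ℝ) :
    ∫⁻ y, ENNReal.ofReal (Real.exp (threshT (a * (y - θ)))) ∂μ ≤
      ENNReal.ofReal (Real.exp (a * (∫ y, y ∂μ - θ) + a ^ 2 / 2 * ∫ y, (y - θ) ^ 2 ∂μ)) := by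
  set c := a * (∫ y, y ∂μ - θ) + a ^ 2 / 2 * ∫ y, (y - θ) ^ 2 ∂μ
  have hbound (y : ℝ) :
      Real.exp (threshT (a * (y - θ))) ≤ 1 + a * (y - θ) + a ^ 2 / 2 * (y - θ) ^ 2 :=
    (exp_threshT_le _).trans_eq (by ring)
  calc ∫⁻ y, ENNReal.ofReal (Real.exp (threshT (a * (y - θ)))) ∂μ
      ≤ ∫⁻ y, ENNReal.ofReal (1 + a * (y - θ) + a ^ 2 / 2 * (y - θ) ^ 2) ∂μ :=
        lintegral_mono fun y => ENNReal.ofReal_le_ofReal (hbound y)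
    _ = ENNReal.ofReal (1 + c) := by
        rw [← ofReal_integral_eq_lintegral_ofReal (integrable_quadratic hμ θ _ _ _)
          (ae_of_all _ fun y => (Real.exp_pos _).le.trans (hbound y)), integral_quadratic hμ,
          add_assoc]
    _ ≤ ENNReal.ofReal (Real.exp c) :=
        ENNReal.ofReal_le_ofReal (by linarith [Real.add_one_le_exp c])

end Moments

lemma measure_le_sum_threshT_le {Ω : Type*} [MeasurableSpace Ω] {P : Measure Ω} {n : ℕ}
    {Y : Fin n → Ω → ℝ} (hY : ∀ i, Measurable (Y i)) (hind : iIndepFun Y P)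
    {μ : Measure ℝ} [IsProbabilityMeasure μ] (hid : ∀ i, P.map (Y i) = μ)
    (hμ : Integrable (fun y => y ^ 2) μ) (a θ L : ℝ) :
    P {ω | n * (a * (∫ y, y ∂μ - θ) + a ^ 2 / 2 * ∫ y, (y - θ) ^ 2 ∂μ) + L ≤
        ∑ i, threshT (a * (Y i ω - θ))} ≤ ENNReal.ofReal (Real.exp (-L)) := by
  set c := a * (∫ y, y ∂μ - θ) + a ^ 2 / 2 * ∫ y, (y - θ) ^ 2 ∂μ
  set g : ℝ → ℝ≥0∞ := fun y => ENNReal.ofReal (Real.exp (threshT (a * (y - θ))))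
  have hg : Measurable g := by fun_prop
  have hprod : ∫⁻ ω, ∏ i, g (Y i ω) ∂P = (∫⁻ y, g y ∂μ) ^ n := by
    rw [lintegral_prod_eq_prod_lintegral_of_indepFun Finset.univ (fun i ω => g (Y i ω))
      (hind.comp _ fun _ => hg) fun i => hg.comp (hY i)]
    simp [← lintegral_map hg (hY _), hid]
  have hevent : {ω | n * c + L ≤ ∑ i, threshT (a * (Y i ω - θ))} ⊆
      {ω | ENNReal.ofReal (Real.exp (n * c + L)) ≤ ∏ i, g (Y i ω)} := fun ω hω => by
    simp only [g, Set.mem_ofPred_eq, ← ENNReal.ofReal_prod_of_nonneg fun i _ => (Real.exp_pos _).le,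
      ← Real.exp_sum] at hω ⊢
    exact ENNReal.ofReal_le_ofReal (Real.exp_le_exp.2 hω)
  calc P {ω | n * c + L ≤ ∑ i, threshT (a * (Y i ω - θ))}
      ≤ (∫⁻ ω, ∏ i, g (Y i ω) ∂P) / ENNReal.ofReal (Real.exp (n * c + L)) :=
        (measure_mono hevent).trans <| meas_ge_le_lintegral_div
          (Finset.measurable_prod _ fun i _ => hg.comp (hY i)).aemeasurable
          (by simp [Real.exp_pos]) ENNReal.ofReal_ne_top
    _ ≤ ENNReal.ofReal (Real.exp c) ^ n / ENNReal.ofReal (Real.exp (n * c + L)) := by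
        rw [hprod]; gcongr; exact lintegral_exp_threshT_le hμ a θ
    _ = ENNReal.ofReal (Real.exp (-L)) := by
        rw [← ENNReal.ofReal_pow (Real.exp_pos _).le, ← ENNReal.ofReal_div_of_pos (Real.exp_pos _),
          ← Real.exp_nat_mul, ← Real.exp_sub]
        ring_nf

lemma sqrt_calibration {n : ℕ} (hn : 0 < n) {L Q : ℝ} (hL : 0 < L) (hQ : 0 < Q) :
    √(2 * L / (n * Q)) * Q / 2 + L / (n * √(2 * L / (n * Q))) = √(2 * Q * L / n) := by
  set α := √(2 * L / (n * Q))
  have hα : 0 < α := Real.sqrt_pos.2 (by positivity)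
  have hα2 : α ^ 2 = 2 * L / (n * Q) := Real.sq_sqrt (by positivity)
  have hδ : √(2 * Q * L / n) = α * Q := by
    rw [show 2 * Q * L / n = (α * Q) ^ 2 by rw [mul_pow, hα2]; field_simp]
    exact Real.sqrt_sq (by positivity)
  rw [hδ]
  field_simp
  rw [hα2]
  field_simp
  ring

lemma measure_lt_abs_sub_thetaHat_le {Ω : Type*} [MeasurableSpace Ω] {P : Measure Ω} {n : ℕ}
    (hn : 0 < n) {Y : Fin n → Ω → ℝ} (hY : ∀ i, Measurable (Y i)) (hind : iIndepFun Y P)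
    {μ : Measure ℝ} [IsProbabilityMeasure μ] (hid : ∀ i, P.map (Y i) = μ)
    (hμ : Integrable (fun y => y ^ 2) μ) {θ L Q : ℝ} (hL : 0 < L) (hQ : 0 < Q)
    (hθ : ∫ y, (y - θ) ^ 2 ∂μ ≤ Q) :
    P {ω | √(2 * Q * L / n) < |∫ y, y ∂μ - thetaHat n √(2 * L / (n * Q)) θ (fun i => Y i ω)|} ≤
      ENNReal.ofReal (2 * Real.exp (-L)) := by
  set α := √(2 * L / (n * Q))
  have hnα : 0 < (n : ℝ) * α := mul_pos (by exact_mod_cast hn) (Real.sqrt_pos.2 (by positivity))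
  set tail := fun a : ℝ => {ω | n * (a * (∫ y, y ∂μ - θ) + a ^ 2 / 2 * ∫ y, (y - θ) ^ 2 ∂μ) + L ≤
    ∑ i, threshT (a * (Y i ω - θ))}
  -- the lower tail of `θ̂` is the upper tail of `∑ T (-α (Yᵢ - θ))`, since `T` is odd
  have hsplit : {ω | √(2 * Q * L / n) < |∫ y, y ∂μ - thetaHat n α θ (fun i => Y i ω)|} ⊆
      tail α ∪ tail (-α) := by
    intro ω hω
    have hneg : ∑ i, threshT (-α * (Y i ω - θ)) = -∑ i, threshT (α * (Y i ω - θ)) := by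
      simp [neg_mul, threshT_neg]
    have hq := mul_le_mul_of_nonneg_left hθ (by positivity : (0 : ℝ) ≤ n * α ^ 2 / 2)
    have hS : ∑ i, threshT (α * (Y i ω - θ)) = n * α * (thetaHat n α θ (fun i => Y i ω) - θ) := by
      rw [thetaHat, add_sub_cancel_left, ← mul_assoc, mul_one_div_cancel hnα.ne', one_mul]
    simp only [Set.mem_ofPred_eq, Set.mem_union, tail, hneg, hS] at hω ⊢
    rw [← sqrt_calibration hn hL hQ, lt_abs] at hω
    have hL' : L / (n * α) * (n * α) = L := div_mul_cancel₀ L hnα.ne'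
    rcases hω with h | h
    · right; nlinarith [mul_lt_mul_of_pos_right h hnα]
    · left; nlinarith [mul_lt_mul_of_pos_right h hnα]
  calc _ ≤ P (tail α ∪ tail (-α)) := measure_mono hsplit
    _ ≤ P (tail α) + P (tail (-α)) := measure_union_le _ _
    _ ≤ ENNReal.ofReal (Real.exp (-L)) + ENNReal.ofReal (Real.exp (-L)) :=
        add_le_add (measure_le_sum_threshT_le hY hind hid hμ _ _ _)
          (measure_le_sum_threshT_le hY hind hid hμ _ _ _)
    _ = ENNReal.ofReal (2 * Real.exp (-L)) := by
        rw [← ENNReal.ofReal_add (Real.exp_pos _).le (Real.exp_pos _).le, two_mul]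

lemma uniform_preimage_affine_le {m d c t : ℝ} (hc : 0 < c) (ht : |m - t| ≤ d) (A : Set ℝ) :
    ((2 : ℝ≥0∞)⁻¹ • volume.restrict (Set.Ioo (-1 : ℝ) 1)) {u | t + c * u ∈ A} ≤
      ENNReal.ofReal (2 * c)⁻¹ * volume.restrict (Set.Ioo (m - (d + c)) (m + (d + c))) A := by
  have hsub : {u | t + c * u ∈ A} ∩ Set.Ioo (-1) 1 ⊆
      (fun u => t + c * u) ⁻¹' (A ∩ Set.Ioo (m - (d + c)) (m + (d + c))) := by
    rintro u ⟨hu, h1, h2⟩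
    have := abs_le.1 ht
    exact ⟨hu, by nlinarith, by nlinarith⟩
  rw [Measure.smul_apply, Measure.restrict_apply' measurableSet_Ioo,
    Measure.restrict_apply' measurableSet_Ioo, smul_eq_mul, mul_inv,
    ENNReal.ofReal_mul (by norm_num), ENNReal.ofReal_inv_of_pos two_pos, ENNReal.ofReal_ofNat, mul_assoc]
  gcongr
  calc volume ({u | t + c * u ∈ A} ∩ Set.Ioo (-1) 1)
      ≤ volume ((fun u => t + c * u) ⁻¹' (A ∩ Set.Ioo (m - (d + c)) (m + (d + c)))) :=
        measure_mono hsub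
    _ = ENNReal.ofReal c⁻¹ * volume (A ∩ Set.Ioo (m - (d + c)) (m + (d + c))) := by
        rw [show (fun u => t + c * u) = (t + ·) ∘ (c * ·) from rfl, Set.preimage_comp,
          Real.volume_preimage_mul_left hc.ne', measure_preimage_add, abs_of_pos (inv_pos.2 hc)]

lemma measure_shift_uniform_le {Ω : Type*} [MeasurableSpace Ω] {P : Measure Ω}
    [IsFiniteMeasure P] {S : Type*} [MeasurableSpace S] {Z : Ω → S} {θ V : Ω → ℝ}
    (hZ : Measurable Z) (hθ : Measurable θ) (hV : Measurable V)
    (hind : IndepFun (fun ω => (Z ω, θ ω)) V P)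
    (hVlaw : P.map V = (2 : ℝ≥0∞)⁻¹ • volume.restrict (Set.Ioo (-1 : ℝ) 1))
    {B : Set (S × ℝ)} (hB : MeasurableSet B) {m d c : ℝ} (hc : 0 < c) {p : ℝ≥0∞}
    (hp : ∀ t ∈ Set.Ioo (m - (d + c)) (m + (d + c)), P {ω | (Z ω, t) ∈ B} ≤ p) :
    P {ω | |m - θ ω| ≤ d ∧ (Z ω, θ ω + c * V ω) ∈ B} ≤ ENNReal.ofReal ((d + c) / c) * p := by
  set J := Set.Ioo (m - (d + c)) (m + (d + c))
  set ρ := P.map fun ω => (Z ω, θ ω)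
  have hW : Measurable fun ω => (Z ω, θ ω) := hZ.prodMk hθ
  have hE : MeasurableSet {w : (S × ℝ) × ℝ | |m - w.1.2| ≤ d ∧ (w.1.1, w.1.2 + c * w.2) ∈ B} :=
    (measurableSet_le (by fun_prop : Measurable fun w : (S × ℝ) × ℝ => |m - w.1.2|)
      measurable_const).inter (hB.preimage (by fun_prop))
  have hB' : MeasurableSet {w : (S × ℝ) × ℝ | (w.1.1, w.2) ∈ B} := hB.preimage (by fun_prop)
  have hlaw := (indepFun_iff_map_prod_eq_prod_map_map hW.aemeasurable hV.aemeasurable).1 hind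
  have hρ (t : ℝ) : ρ {z | (z.1, t) ∈ B} = P {ω | (Z ω, t) ∈ B} :=
    Measure.map_apply hW (hB.preimage (by fun_prop))
  have hslice (z : S × ℝ) :
      ((2 : ℝ≥0∞)⁻¹ • volume.restrict (Set.Ioo (-1 : ℝ) 1))
          {u | |m - z.2| ≤ d ∧ (z.1, z.2 + c * u) ∈ B} ≤
        ENNReal.ofReal (2 * c)⁻¹ * volume.restrict J {θ | (z.1, θ) ∈ B} := by
    by_cases hz : |m - z.2| ≤ d
    · simp only [hz, true_and]
      exact uniform_preimage_affine_le hc hz _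
    · simp [hz]
  have hfubini : ∫⁻ z, volume.restrict J {θ | (z.1, θ) ∈ B} ∂ρ =
      ∫⁻ t in J, ρ {z | (z.1, t) ∈ B} :=
    (Measure.prod_apply hB').symm.trans (Measure.prod_apply_symm hB')
  calc P {ω | |m - θ ω| ≤ d ∧ (Z ω, θ ω + c * V ω) ∈ B}
      = ∫⁻ z, ((2 : ℝ≥0∞)⁻¹ • volume.restrict (Set.Ioo (-1 : ℝ) 1))
          {u | |m - z.2| ≤ d ∧ (z.1, z.2 + c * u) ∈ B} ∂ρ := by
        refine (Measure.map_apply (hW.prodMk hV) hE).symm.trans ?_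
        rw [hlaw, hVlaw, Measure.prod_apply hE]
        rfl
    _ ≤ ∫⁻ z, ENNReal.ofReal (2 * c)⁻¹ * volume.restrict J {θ | (z.1, θ) ∈ B} ∂ρ :=
        lintegral_mono hslice
    _ ≤ ENNReal.ofReal (2 * c)⁻¹ * ∫⁻ _ in J, p := by
        rw [lintegral_const_mul' _ _ ENNReal.ofReal_ne_top, hfubini]
        refine mul_le_mul_right (lintegral_mono_ae (ae_restrict_of_forall_mem measurableSet_Ioo
          fun t ht => ?_)) _
        exact (hρ t).trans_le (hp t ht)
    _ = ENNReal.ofReal ((d + c) / c) * p := by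
        rw [setLIntegral_const, Real.volume_Ioo, mul_comm p, ← mul_assoc,
          ← ENNReal.ofReal_mul (by positivity)]
        congr 2
        field_simp
        ring

section Sequences

variable {n : ℕ} {v₀ δ₀ θ₀ : ℝ} {ε x : ℕ → ℝ}

lemma deltaSeq_pos (hn : 0 < n) (hv₀ : 0 < v₀) {k : ℕ} (hk : 1 ≤ k) (hε : ε k ∈ Set.Ioo 0 1)
    (hx : 2 ≤ k → 0 < x k) : 0 < deltaSeq n v₀ δ₀ ε x k := by
  have hlogε : 0 < Real.log (ε k)⁻¹ := Real.log_pos ((one_lt_inv₀ hε.1).2 hε.2)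
  match k, hk with
  | 1, _ => exact Real.sqrt_pos.2 (by positivity)
  | i + 2, _ =>
    have hlogx : 0 < Real.log (1 + (x (i + 2))⁻¹) :=
      Real.log_pos (lt_add_of_pos_right 1 (inv_pos.2 (hx le_add_self)))
    exact Real.sqrt_pos.2 (by positivity)

lemma thetaSeq_congr (Y : Fin n → ℝ) {U U' : ℕ → ℝ} :
    ∀ {k : ℕ}, (∀ j ≤ k, U j = U' j) →
      thetaSeq n v₀ δ₀ θ₀ ε x Y U k = thetaSeq n v₀ δ₀ θ₀ ε x Y U' k
  | 0, _ => rfl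
  | 1, _ => rfl
  | i + 2, h => by
    rw [thetaSeq, thetaSeq, thetaSeq_congr Y fun j hj => h j (by omega), h (i + 2) le_rfl]

lemma measurable_thetaSeq :
    ∀ k, Measurable fun p : (Fin n → ℝ) × (ℕ → ℝ) => thetaSeq n v₀ δ₀ θ₀ ε x p.1 p.2 k
  | 0 => measurable_const
  | 1 => (continuous_thetaHat n _).measurable.comp (measurable_const.prodMk measurable_fst)
  | i + 2 => (continuous_thetaHat n _).measurable.comp
      (((measurable_thetaSeq (i + 1)).add (by fun_prop)).prodMk measurable_fst)

lemma indepFun_sample_thetaSeq {Ω : Type*} [MeasurableSpace Ω] {P : Measure Ω}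
    {Y : Fin n → Ω → ℝ} {U : ℕ → Ω → ℝ} (hY : ∀ i, Measurable (Y i))
    (hU : ∀ i, Measurable (U i)) (hindep : iIndepFun (Sum.elim Y U) P) {k l : ℕ} (hkl : k < l) :
    IndepFun (fun ω => ((fun i => Y i ω),
      thetaSeq n v₀ δ₀ θ₀ ε x (fun i => Y i ω) (fun i => U i ω) k)) (U l) P := by
  classical
  set S : Finset (Fin n ⊕ ℕ) := Finset.univ.disjSum (Finset.range (k + 1))
  have hdisj : Disjoint S {Sum.inr l} := by simp [S]; omega
  have hf (i : Fin n ⊕ ℕ) : Measurable (Sum.elim Y U i) := by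
    rcases i with a | b
    exacts [hY a, hU b]
  let sample (w : S → ℝ) : Fin n → ℝ := fun a => w ⟨Sum.inl a, by simp [S]⟩
  let rand (w : S → ℝ) : ℕ → ℝ := fun b =>
    if hb : b ≤ k then w ⟨Sum.inr b, by simp [S]; omega⟩ else 0
  have hrand : Measurable rand := measurable_pi_lambda _ fun b => by
    by_cases hb : b ≤ k <;> simp only [rand, hb, dite_true, dite_false] <;> fun_prop
  have hφ : Measurable fun w => (sample w, thetaSeq n v₀ δ₀ θ₀ ε x (sample w) (rand w) k) := by
    have hsample : Measurable sample := measurable_pi_lambda _ fun a => measurable_pi_apply _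
    exact hsample.prodMk ((measurable_thetaSeq k).comp (hsample.prodMk hrand))
  convert (hindep.indepFun_finset S {Sum.inr l} hdisj hf).comp hφ
    (measurable_pi_apply ⟨Sum.inr l, Finset.mem_singleton_self _⟩) using 1
  · funext ω
    refine Prod.ext rfl (thetaSeq_congr _ fun j hj => ?_)
    simp [rand, hj]
  · rfl

end Sequences

lemma measure_le_sum_Icc_of_compl_inter_le {α : Type*} [MeasurableSpace α] (μ : Measure α)
    {A : ℕ → Set α} {p : ℕ → ℝ≥0∞} {k : ℕ} (hk : 1 ≤ k) (h1 : μ (A 1) ≤ p 1)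
    (hstep : ∀ i, 1 ≤ i → i < k → μ ((A i)ᶜ ∩ A (i + 1)) ≤ p (i + 1)) :
    μ (A k) ≤ ∑ i ∈ Finset.Icc 1 k, p i := by
  induction k, hk using Nat.le_induction with
  | base => simpa using h1
  | succ i hi ih =>
    have hcover : A (i + 1) ⊆ ((A i)ᶜ ∩ A (i + 1)) ∪ A i := fun ω hω => by
      by_cases h : ω ∈ A i
      exacts [Or.inr h, Or.inl ⟨h, hω⟩]
    calc μ (A (i + 1)) ≤ μ ((A i)ᶜ ∩ A (i + 1)) + μ (A i) :=
          (measure_mono hcover).trans (measure_union_le _ _)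
      _ ≤ p (i + 1) + ∑ j ∈ Finset.Icc 1 i, p j :=
          add_le_add (hstep i hi i.lt_succ_self) (ih fun j hj hjk => hstep j hj (by omega))
      _ = ∑ j ∈ Finset.Icc 1 (i + 1), p j := by
          rw [Finset.sum_Icc_succ_top (by omega), add_comm]

lemma ofReal_one_sub_le_measure_compl {α : Type*} [MeasurableSpace α] {μ : Measure α}
    [IsProbabilityMeasure μ] {s : Set α} {q : ℝ} (hq : 0 ≤ q) (hs : μ s ≤ ENNReal.ofReal q) :
    ENNReal.ofReal (1 - q) ≤ μ sᶜ := by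
  rw [ENNReal.ofReal_sub _ hq, ENNReal.ofReal_one, tsub_le_iff_right, ← measure_univ (μ := μ)]
  exact (measure_univ_le_add_compl s).trans (by rw [add_comm]; gcongr)

section Iteration

variable {Ω : Type*} [MeasurableSpace Ω] {P : Measure Ω} {n : ℕ} {Y : Fin n → Ω → ℝ}
  {U : ℕ → Ω → ℝ} {μ : Measure ℝ} [IsProbabilityMeasure μ] {m v₀ δ₀ θ₀ : ℝ} {ε x : ℕ → ℝ}

lemma measure_lt_abs_sub_thetaSeq_one_le (hn : 0 < n) (hY : ∀ i, Measurable (Y i))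
    (hind : iIndepFun Y P) (hid : ∀ i, P.map (Y i) = μ) (hμ : Integrable (fun y => y ^ 2) μ)
    (hm : m = ∫ y, y ∂μ) (hv₀ : 0 < v₀) (hvle : ∫ y, (y - m) ^ 2 ∂μ ≤ v₀) (hθ₀ : |m - θ₀| ≤ δ₀)
    (hε : ε 1 ∈ Set.Ioo 0 1) :
    P {ω | deltaSeq n v₀ δ₀ ε x 1 <
      |m - thetaSeq n v₀ δ₀ θ₀ ε x (fun i => Y i ω) (fun i => U i ω) 1|} ≤
      ENNReal.ofReal (2 * ε 1) := by
  have hL : 0 < Real.log (ε 1)⁻¹ := Real.log_pos ((one_lt_inv₀ hε.1).2 hε.2)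
  have hQ : ∫ y, (y - θ₀) ^ 2 ∂μ ≤ v₀ + δ₀ ^ 2 := by
    rw [integral_sub_sq hμ, ← hm]
    nlinarith [sq_abs (m - θ₀), abs_nonneg (m - θ₀)]
  have := measure_lt_abs_sub_thetaHat_le hn hY hind hid hμ hL (by positivity) hQ
  rwa [← hm, Real.exp_neg, Real.exp_log (inv_pos.2 hε.1), inv_inv] at this

lemma measure_compl_inter_lt_abs_sub_thetaSeq_le [IsProbabilityMeasure P] (hn : 0 < n)
    (hY : ∀ i, Measurable (Y i)) (hU : ∀ i, Measurable (U i))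
    (hindep : iIndepFun (Sum.elim Y U) P) (hid : ∀ i, P.map (Y i) = μ)
    (hμ : Integrable (fun y => y ^ 2) μ) (hm : m = ∫ y, y ∂μ) (hv₀ : 0 < v₀)
    (hvle : ∫ y, (y - m) ^ 2 ∂μ ≤ v₀) {j : ℕ} (hε : ε (j + 2) ∈ Set.Ioo 0 1) (hx : 0 < x (j + 2))
    (hd : 0 < deltaSeq n v₀ δ₀ ε x (j + 1))
    (hUlaw : P.map (U (j + 2)) = (2 : ℝ≥0∞)⁻¹ • volume.restrict (Set.Ioo (-1 : ℝ) 1)) :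
    P ({ω | deltaSeq n v₀ δ₀ ε x (j + 1) <
        |m - thetaSeq n v₀ δ₀ θ₀ ε x (fun i => Y i ω) (fun i => U i ω) (j + 1)|}ᶜ ∩
      {ω | deltaSeq n v₀ δ₀ ε x (j + 2) <
        |m - thetaSeq n v₀ δ₀ θ₀ ε x (fun i => Y i ω) (fun i => U i ω) (j + 2)|}) ≤
      ENNReal.ofReal (2 * ε (j + 2)) := by
  set d := deltaSeq n v₀ δ₀ ε x (j + 1)
  set L := Real.log (ε (j + 2))⁻¹ + Real.log (1 + (x (j + 2))⁻¹)
  set B := {p : (Fin n → ℝ) × ℝ | deltaSeq n v₀ δ₀ ε x (j + 2) <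
    |m - thetaHat n (alphaSeq n v₀ δ₀ ε x (j + 2)) p.2 p.1|}
  have hL : 0 < L := add_pos (Real.log_pos ((one_lt_inv₀ hε.1).2 hε.2))
    (Real.log_pos (lt_add_of_pos_right 1 (inv_pos.2 hx)))
  have hind : iIndepFun Y P := hindep.precomp (g := Sum.inl) Sum.inl_injective
  have hp (t : ℝ) (ht : t ∈ Set.Ioo (m - (d + x (j + 2) * d)) (m + (d + x (j + 2) * d))) :
      P {ω | ((fun i => Y i ω), t) ∈ B} ≤ ENNReal.ofReal (2 * Real.exp (-L)) := by
    have hQ : ∫ y, (y - t) ^ 2 ∂μ ≤ v₀ + (1 + x (j + 2)) ^ 2 * d ^ 2 := by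
      rw [integral_sub_sq hμ, ← hm]
      nlinarith [ht.1, ht.2]
    have := measure_lt_abs_sub_thetaHat_le hn hY hind hid hμ hL (by positivity) hQ
    rwa [← hm] at this
  have hθ : Measurable fun ω =>
      thetaSeq n v₀ δ₀ θ₀ ε x (fun i => Y i ω) (fun i => U i ω) (j + 1) :=
    (measurable_thetaSeq (j + 1)).comp
      ((measurable_pi_lambda _ hY).prodMk (measurable_pi_lambda _ hU))
  have hshift := measure_shift_uniform_le (measurable_pi_lambda _ hY) hθ (hU _)
    (indepFun_sample_thetaSeq hY hU hindep (Nat.lt_succ_self _)) hUlaw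
    (measurableSet_lt measurable_const (by fun_prop)) (mul_pos hx hd) hp
  have hconst : ENNReal.ofReal ((d + x (j + 2) * d) / (x (j + 2) * d)) *
      ENNReal.ofReal (2 * Real.exp (-L)) = ENNReal.ofReal (2 * ε (j + 2)) := by
    rw [← ENNReal.ofReal_mul (by positivity), Real.exp_neg, Real.exp_add,
      Real.exp_log (inv_pos.2 hε.1), Real.exp_log (by positivity)]
    congr 1
    field_simp
    ring
  refine le_of_eq_of_le (congrArg P ?_) (hshift.trans_eq hconst)
  ext ω
  simp only [Set.mem_inter_iff, Set.mem_compl_iff, Set.mem_ofPred_eq, not_lt]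
  rfl

end Iteration

theorem iterated_truncated_mean_general
    {Ω : Type*} [MeasurableSpace Ω] (P : Measure Ω) [IsProbabilityMeasure P]
    (n : ℕ) (hn : 0 < n) (Y : Fin n → Ω → ℝ) (hYmeas : ∀ i, Measurable (Y i))
    (U : ℕ → Ω → ℝ) (hUmeas : ∀ i, Measurable (U i))
    (μ : Measure ℝ) [IsProbabilityMeasure μ]
    (hindep : iIndepFun (Sum.elim Y U) P)
    (hid : ∀ i, Measure.map (Y i) P = μ)
    (hL2 : Integrable (fun y => y ^ 2) μ)
    (m v : ℝ) (hm : m = ∫ y, y ∂μ) (hv : v = ∫ y, (y - m) ^ 2 ∂μ)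
    (v₀ δ₀ θ₀ : ℝ) (hv₀ : 0 < v₀) (hvle : v ≤ v₀) (hθ₀ : |m - θ₀| ≤ δ₀)
    (k : ℕ) (hk : 1 ≤ k)
    (ε : ℕ → ℝ) (hε : ∀ i, 1 ≤ i → i ≤ k → ε i ∈ Set.Ioo (0 : ℝ) 1)
    (x : ℕ → ℝ) (hx : ∀ i, 2 ≤ i → i ≤ k → 0 < x i)
    (hU : ∀ i, 2 ≤ i → i ≤ k →
      Measure.map (U i) P = (2 : ENNReal)⁻¹ • volume.restrict (Set.Ioo (-1 : ℝ) 1)) :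
    ENNReal.ofReal (1 - 2 * ∑ i ∈ Finset.Icc 1 k, ε i) ≤
      P {ω | |m - thetaSeq n v₀ δ₀ θ₀ ε x (fun i => Y i ω) (fun i => U i ω) k| ≤
        deltaSeq n v₀ δ₀ ε x k} := by
  have hYind : iIndepFun Y P := hindep.precomp (g := Sum.inl) Sum.inl_injective
  have hvar : ∫ y, (y - m) ^ 2 ∂μ ≤ v₀ := hv ▸ hvle
  have hbad : P {ω | deltaSeq n v₀ δ₀ ε x k <
        |m - thetaSeq n v₀ δ₀ θ₀ ε x (fun i => Y i ω) (fun i => U i ω) k|} ≤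
      ∑ i ∈ Finset.Icc 1 k, ENNReal.ofReal (2 * ε i) := by
    refine measure_le_sum_Icc_of_compl_inter_le P (A := fun i => {ω | deltaSeq n v₀ δ₀ ε x i <
      |m - thetaSeq n v₀ δ₀ θ₀ ε x (fun a => Y a ω) (fun a => U a ω) i|})
      (p := fun i => ENNReal.ofReal (2 * ε i)) hk (measure_lt_abs_sub_thetaSeq_one_le hn hYmeas
      hYind hid hL2 hm hv₀ hvar hθ₀ (hε 1 le_rfl hk)) fun i hi hik => ?_
    obtain ⟨j, rfl⟩ := Nat.exists_eq_add_of_le' hi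
    exact measure_compl_inter_lt_abs_sub_thetaSeq_le hn hYmeas hUmeas hindep hid hL2 hm hv₀ hvar
      (hε _ (by omega) hik) (hx _ (by omega) hik)
      (deltaSeq_pos hn hv₀ hi (hε _ hi hik.le) fun h => hx _ h hik.le) (hU _ (by omega) hik)
  have hε0 : ∀ i ∈ Finset.Icc 1 k, 0 ≤ 2 * ε i := fun i hi =>
    mul_nonneg zero_le_two (hε i (Finset.mem_Icc.1 hi).1 (Finset.mem_Icc.1 hi).2).1.le
  rw [← ENNReal.ofReal_sum_of_nonneg hε0, ← Finset.mul_sum] at hbad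
  have hq : 0 ≤ 2 * ∑ i ∈ Finset.Icc 1 k, ε i := by
    rw [Finset.mul_sum]; exact Finset.sum_nonneg hε0
  simpa only [Set.compl_ofPred, not_lt] using ofReal_one_sub_le_measure_compl hq hbad

/-- Proposition 2.1 (iterated truncated mean estimates): if `v ≤ v₀` and `|m - θ₀| ≤ δ₀`,
and `U₂, …, U_k` are uniform on `(-1,1)` and independent of each other and of the sample,
then with probability at least `1 - 2 ∑_{i=1}^k εᵢ`, `|m - θ̃_k| ≤ δ_k`. -/
theorem iterated_truncated_mean
    {Ω : Type*} [MeasurableSpace Ω] (P : Measure Ω) [IsProbabilityMeasure P]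
    (n : ℕ) (hn : 0 < n) (Y : Fin n → Ω → ℝ) (hYmeas : ∀ i, Measurable (Y i))
    (U : ℕ → Ω → ℝ) (hUmeas : ∀ i, Measurable (U i))
    (μ : Measure ℝ) [IsProbabilityMeasure μ]
    (hindep : iIndepFun (Sum.elim Y U) P)
    (hid : ∀ i, Measure.map (Y i) P = μ)
    (hL2 : Integrable (fun y => y ^ 2) μ)
    (m v : ℝ) (hm : m = ∫ y, y ∂μ) (hv : v = ∫ y, (y - m) ^ 2 ∂μ)
    (v₀ δ₀ θ₀ : ℝ) (hv₀ : 0 < v₀) (hδ₀ : 0 ≤ δ₀) (hvle : v ≤ v₀) (hθ₀ : |m - θ₀| ≤ δ₀)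
    (k : ℕ) (hk : 1 ≤ k)
    (ε : ℕ → ℝ) (hε : ∀ i, 1 ≤ i → i ≤ k → ε i ∈ Set.Ioo (0 : ℝ) 1)
    (x : ℕ → ℝ) (hx : ∀ i, 2 ≤ i → i ≤ k → 0 < x i)
    (hU : ∀ i, 2 ≤ i → i ≤ k →
      Measure.map (U i) P = (2 : ENNReal)⁻¹ • volume.restrict (Set.Ioo (-1 : ℝ) 1)) :
    ENNReal.ofReal (1 - 2 * ∑ i ∈ Finset.Icc 1 k, ε i) ≤
      P {ω | |m - thetaSeq n v₀ δ₀ θ₀ ε x (fun i => Y i ω) (fun i => U i ω) k| ≤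
        deltaSeq n v₀ δ₀ ε x k} :=
  iterated_truncated_mean_general P n hn Y hYmeas U hUmeas μ hindep hid hL2 m v hm hv v₀ δ₀ θ₀ hv₀
    hvle hθ₀ k hk ε hε x hx hU
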